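/- Let X, S be topological spaces with X locally compact Hausdorff, f: X → S continuous and proper, with the property that every fiber of f has compact connected components. Define the equivalence relation on X: x ~ y iff x and y lie in the same connected component of the same fiber of f. Then each equivalence class is compact, and if additionally every connected component of every fiber is open in its fiber, the quotient map X → X/~ is proper onto its image with connected fibers. -/
import Mathlib


/-- Topological core of Stein factorization (Cartan–Remmert): let `f : X → S` be a
continuous proper map on a locally compact Hausdorff space whose fibers have compact
connected components, and let `~` be the relation "lying in the same connected component
of the same fiber". Then every equivalence class is compact, and if each fiber component
is open in its fiber, the quotient map `X → X/~` is proper with connected fibers. -/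
theorem stmt_8 {X S : Type*} [TopologicalSpace X] [TopologicalSpace S]
    [LocallyCompactSpace X] [T2Space X]
    (f : X → S) (hf : Continuous f) (hproper : IsProperMap f)
    (hcomp : ∀ x : X, IsCompact (connectedComponentIn (f ⁻¹' {f x}) x))
    (s : Setoid X)
    (hs : ∀ x y : X, s.r x y ↔ y ∈ connectedComponentIn (f ⁻¹' {f x}) x) :
    (∀ x : X, IsCompact {y : X | s.r x y}) ∧
    ((∀ x : X, ∃ U : Set X, IsOpen U ∧
        U ∩ f ⁻¹' {f x} = connectedComponentIn (f ⁻¹' {f x}) x) →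
      IsProperMap (Quotient.mk s) ∧
      (∀ q : Quotient s, IsConnected (Quotient.mk s ⁻¹' {q}))) := by
  have hclass : ∀ x : X, {y : X | s.r x y} = connectedComponentIn (f ⁻¹' {f x}) x := by
    intro x; ext y; exact hs x y
  have hfib : ∀ x : X, Quotient.mk s ⁻¹' {Quotient.mk s x}
      = connectedComponentIn (f ⁻¹' {f x}) x := by
    intro x
    rw [← hclass x]
    ext y
    simp only [Set.mem_preimage, Set.mem_singleton_iff, Set.mem_setOf_eq]
    constructor
    · intro h
      exact s.symm (Quotient.exact h)
    · intro h
      exact Quotient.sound (s.symm h)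
  refine ⟨fun x => (hclass x) ▸ hcomp x, fun hopen => ?_⟩
  -- saturation of closed sets is closed
  have hsat : ∀ C : Set X, IsClosed C →
      IsClosed (Quotient.mk s ⁻¹' (Quotient.mk s '' C)) := by
    intro C hC
    rw [← isOpen_compl_iff]
    rw [isOpen_iff_forall_mem_open]
    intro y hy
    set F : Set X := f ⁻¹' {f y} with hF
    set K : Set X := connectedComponentIn F y with hK
    have hyF : y ∈ F := rfl
    have hKcomp : IsCompact K := hcomp y
    have hKC : ∀ x ∈ K, x ∉ C := by
      intro x hxK hxC
      exact hy ⟨x, hxC, (Quotient.sound ((hs y x).2 hxK)).symm⟩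
    obtain ⟨U, hUopen, hUF⟩ := hopen y
    have hKU : K ⊆ U ∩ Cᶜ := fun x hx =>
      ⟨(hUF.superset hx).1, hKC x hx⟩
    obtain ⟨L, hLcomp, hKL, hLU⟩ :=
      exists_compact_between hKcomp (hUopen.inter hC.isOpen_compl) hKU
    set V : Set X := interior L with hV
    have hVopen : IsOpen V := isOpen_interior
    have hclV : closure V ⊆ L := by
      rw [← hLcomp.isClosed.closure_eq]
      exact closure_mono interior_subset
    set D : Set X := closure V \ V with hD
    have hDclosed : IsClosed D := isClosed_closure.sdiff hVopen
    have hDF : ∀ z ∈ D, z ∉ F := by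
      intro z hzD hzF
      have hzL : z ∈ L := hclV hzD.1
      have hzU : z ∈ U := (hLU hzL).1
      have : z ∈ K := hUF.subset ⟨hzU, hzF⟩
      exact hzD.2 (hKL this)
    have hfD : IsClosed (f '' D) := hproper.isClosedMap D hDclosed
    set T : Set X := f ⁻¹' (f '' D)ᶜ with hT
    have hTopen : IsOpen T := hfD.isOpen_compl.preimage hf
    have hyT : y ∈ T := by
      intro hmem
      obtain ⟨d, hdD, hdf⟩ := hmem
      exact hDF d hdD hdf
    refine ⟨V ∩ T, ?_, hVopen.inter hTopen, ⟨hKL (mem_connectedComponentIn hyF), hyT⟩⟩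
    intro z hz hzsat
    obtain ⟨x, hxC, hxz⟩ := hzsat
    have hrxz : s.r x z := Quotient.exact hxz
    have hzKx : z ∈ connectedComponentIn (f ⁻¹' {f x}) x := (hs x z).1 hrxz
    set Kz : Set X := connectedComponentIn (f ⁻¹' {f x}) x with hKz
    have hfxz : f z = f x := connectedComponentIn_subset (f ⁻¹' {f x}) x hzKx
    have hKzD : ∀ d ∈ Kz, d ∉ D := by
      intro d hdKz hdD
      have : f d = f x := connectedComponentIn_subset (f ⁻¹' {f x}) x hdKz
      exact hz.2 ⟨d, hdD, this.trans hfxz.symm⟩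
    have hKzpre : IsPreconnected Kz := isPreconnected_connectedComponentIn
    have hKzsub : Kz ⊆ V ∪ (closure V)ᶜ := by
      intro d hd
      by_cases hdV : d ∈ V
      · exact Or.inl hdV
      · refine Or.inr fun hdcl => hKzD d hd ⟨hdcl, hdV⟩
    have hKzV : Kz ⊆ V := by
      refine hKzpre.subset_left_of_subset_union hVopen isClosed_closure.isOpen_compl
        ?_ hKzsub ⟨z, hzKx, hz.1⟩
      exact disjoint_compl_right.mono_left (subset_closure : V ⊆ closure V)
    have hxV : x ∈ V := hKzV (mem_connectedComponentIn rfl)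
    exact (hLU (interior_subset hxV)).2 hxC
  have hcont : Continuous (Quotient.mk s) := continuous_quotient_mk'
  have hclosed : IsClosedMap (Quotient.mk s) := by
    intro C hC
    rw [← (isQuotientMap_quotient_mk' (s := s)).isClosed_preimage]
    exact hsat C hC
  constructor
  · rw [isProperMap_iff_isClosedMap_and_compact_fibers]
    refine ⟨hcont, hclosed, ?_⟩
    intro q
    induction q using Quotient.ind with
    | _ x => rw [hfib x]; exact hcomp x
  · intro q
    induction q using Quotient.ind with
    | _ x =>
      rw [hfib x]
      exact isConnected_connectedComponentIn_iff.2 rfl
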